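/- Let ρ_AB = Σᵢ pᵢ |ψᵢᴬ⟩⟨ψᵢᴬ| ⊗ |ψᵢᴮ⟩⟨ψᵢᴮ| be a separable state and let A, B be Hermitian operators on the respective subsystems. Then the variance of A⊗I + I⊗B in ρ_AB satisfies ⟨Δ(A⊗I + I⊗B)⟩²_{ρ_AB} ≥ Σᵢ pᵢ (⟨ΔA⟩²_{ψᵢᴬ} + ⟨ΔB⟩²_{ψᵢᴮ}). -/
import Mathlib


open Matrix Kronecker Finset
open scoped ComplexOrder

/-- Variance `⟨ΔX⟩²_ρ = Tr(ρX²) − (Tr(ρX))²` in a mixed state. -/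
noncomputable def varM {n : Type*} [Fintype n] [DecidableEq n]
    (ρ X : Matrix n n ℂ) : ℂ :=
  (ρ * X ^ 2).trace - ((ρ * X).trace) ^ 2

/-- Variance of a Hermitian operator in a pure state. -/
noncomputable def varVec {n : Type*} [Fintype n]
    (ψ : n → ℂ) (X : Matrix n n ℂ) : ℂ :=
  star ψ ⬝ᵥ ((X * X) *ᵥ ψ) - (star ψ ⬝ᵥ (X *ᵥ ψ)) ^ 2

lemma trace_proj_mul {n : Type*} [Fintype n] [DecidableEq n]
    (u : n → ℂ) (M : Matrix n n ℂ) :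
    ((Matrix.vecMulVec u (star u)) * M).trace = star u ⬝ᵥ (M *ᵥ u) := by
  simp only [Matrix.trace, Matrix.diag, Matrix.mul_apply, Matrix.vecMulVec_apply,
    dotProduct, Matrix.mulVec, Pi.star_apply]
  rw [Finset.sum_comm]
  simp only [Finset.mul_sum]
  congr 1; ext j; congr 1; ext i; ring

lemma kron_proj {dA dB : ℕ} (u : Fin dA → ℂ) (w : Fin dB → ℂ) :
    Matrix.vecMulVec u (star u) ⊗ₖ Matrix.vecMulVec w (star w)
      = Matrix.vecMulVec (fun q : Fin dA × Fin dB => u q.1 * w q.2)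
          (star (fun q : Fin dA × Fin dB => u q.1 * w q.2)) := by
  ext ⟨i,j⟩ ⟨k,l⟩
  simp [Matrix.vecMulVec_apply]
  ring

lemma kronVec_mulVec {dA dB : ℕ} (u : Fin dA → ℂ) (w : Fin dB → ℂ)
    (M : Matrix (Fin dA) (Fin dA) ℂ) (N : Matrix (Fin dB) (Fin dB) ℂ) :
    ((M ⊗ₖ N) *ᵥ (fun q : Fin dA × Fin dB => u q.1 * w q.2))
      = fun q => (M *ᵥ u) q.1 * (N *ᵥ w) q.2 := by
  funext q
  simp only [Matrix.mulVec, dotProduct, Matrix.kroneckerMap_apply,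
    Fintype.sum_prod_type, Finset.sum_mul_sum]
  congr 1; ext k; congr 1; ext l; ring

lemma dot_kron {dA dB : ℕ} (u : Fin dA → ℂ) (w : Fin dB → ℂ)
    (f : Fin dA → ℂ) (g : Fin dB → ℂ) :
    (star (fun q : Fin dA × Fin dB => u q.1 * w q.2) ⬝ᵥ fun q => f q.1 * g q.2)
      = (star u ⬝ᵥ f) * (star w ⬝ᵥ g) := by
  simp only [dotProduct, Pi.star_apply, Fintype.sum_prod_type, Finset.sum_mul_sum]
  congr 1; ext k; congr 1; ext l; simp; ring

lemma herm_dot_real {n : ℕ} (A : Matrix (Fin n) (Fin n) ℂ) (hA : A.IsHermitian)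
    (u : Fin n → ℂ) : star (star u ⬝ᵥ (A *ᵥ u)) = star u ⬝ᵥ (A *ᵥ u) := by
  conv_lhs => rw [← star_dotProduct, star_mulVec, ← Matrix.dotProduct_mulVec, hA.eq]

lemma dot_sandwich {dA dB : ℕ} (u : Fin dA → ℂ) (w : Fin dB → ℂ)
    (M : Matrix (Fin dA) (Fin dA) ℂ) (N : Matrix (Fin dB) (Fin dB) ℂ) :
    (star (fun q : Fin dA × Fin dB => u q.1 * w q.2) ⬝ᵥ
        ((M ⊗ₖ N) *ᵥ (fun q : Fin dA × Fin dB => u q.1 * w q.2)))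
      = (star u ⬝ᵥ (M *ᵥ u)) * (star w ⬝ᵥ (N *ᵥ w)) := by
  rw [kronVec_mulVec, dot_kron]

theorem stmt17 {dA dB m : ℕ}
    (A : Matrix (Fin dA) (Fin dA) ℂ) (B : Matrix (Fin dB) (Fin dB) ℂ)
    (hA : A.IsHermitian) (hB : B.IsHermitian)
    (p : Fin m → ℝ) (hp : ∀ i, 0 ≤ p i) (hps : ∑ i, p i = 1)
    (ψA : Fin m → Fin dA → ℂ) (ψB : Fin m → Fin dB → ℂ)
    (hnA : ∀ i, star (ψA i) ⬝ᵥ ψA i = 1) (hnB : ∀ i, star (ψB i) ⬝ᵥ ψB i = 1) :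
    -- the separable state `ρ_AB = Σᵢ pᵢ |ψᵢᴬ⟩⟨ψᵢᴬ| ⊗ |ψᵢᴮ⟩⟨ψᵢᴮ|`
    let ρAB : Matrix (Fin dA × Fin dB) (Fin dA × Fin dB) ℂ :=
      ∑ i, ((p i : ℝ) : ℂ) •
        (Matrix.vecMulVec (ψA i) (star (ψA i)) ⊗ₖ Matrix.vecMulVec (ψB i) (star (ψB i)))
    (∑ i, ((p i : ℝ) : ℂ) * (varVec (ψA i) A + varVec (ψB i) B)) ≤
      varM ρAB (A ⊗ₖ (1 : Matrix (Fin dB) (Fin dB) ℂ) +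
        (1 : Matrix (Fin dA) (Fin dA) ℂ) ⊗ₖ B) := by
  intro ρAB
  classical
  set X : Matrix (Fin dA × Fin dB) (Fin dA × Fin dB) ℂ := A ⊗ₖ 1 + 1 ⊗ₖ B with hXdef
  set a : Fin m → ℂ := fun i => star (ψA i) ⬝ᵥ (A *ᵥ ψA i) with ha
  set b : Fin m → ℂ := fun i => star (ψB i) ⬝ᵥ (B *ᵥ ψB i) with hb
  set a2 : Fin m → ℂ := fun i => star (ψA i) ⬝ᵥ ((A * A) *ᵥ ψA i) with ha2
  set b2 : Fin m → ℂ := fun i => star (ψB i) ⬝ᵥ ((B * B) *ᵥ ψB i) with hb2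
  have hρ : ρAB = ∑ i, ((p i : ℝ) : ℂ) •
      Matrix.vecMulVec (fun q : Fin dA × Fin dB => ψA i q.1 * ψB i q.2)
        (star (fun q : Fin dA × Fin dB => ψA i q.1 * ψB i q.2)) := by
    simp only [ρAB, kron_proj]
  -- expectation of X in the i-th pure state
  have hdX : ∀ i, (star (fun q : Fin dA × Fin dB => ψA i q.1 * ψB i q.2) ⬝ᵥ
      (X *ᵥ fun q : Fin dA × Fin dB => ψA i q.1 * ψB i q.2)) = a i + b i := by
    intro i
    rw [hXdef, Matrix.add_mulVec, dotProduct_add,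
      dot_sandwich (ψA i) (ψB i) A 1, dot_sandwich (ψA i) (ψB i) 1 B,
      Matrix.one_mulVec, Matrix.one_mulVec, hnA i, hnB i, mul_one, one_mul]
  have hX2 : X ^ 2 = (A * A) ⊗ₖ 1 + (A ⊗ₖ B + (A ⊗ₖ B + 1 ⊗ₖ (B * B))) := by
    rw [sq, hXdef]
    simp only [Matrix.add_mul, Matrix.mul_add, ← Matrix.mul_kronecker_mul,
      Matrix.one_mul, Matrix.mul_one]
    abel
  have hdX2 : ∀ i, (star (fun q : Fin dA × Fin dB => ψA i q.1 * ψB i q.2) ⬝ᵥ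
      (X ^ 2 *ᵥ fun q : Fin dA × Fin dB => ψA i q.1 * ψB i q.2))
      = a2 i + 2 * (a i * b i) + b2 i := by
    intro i
    rw [hX2, Matrix.add_mulVec, Matrix.add_mulVec, Matrix.add_mulVec,
      dotProduct_add, dotProduct_add, dotProduct_add,
      dot_sandwich (ψA i) (ψB i) (A * A) 1, dot_sandwich (ψA i) (ψB i) A B,
      dot_sandwich (ψA i) (ψB i) 1 (B * B),
      Matrix.one_mulVec, Matrix.one_mulVec, hnA i, hnB i, mul_one, one_mul]
    ring
  have hT1 : (ρAB * X).trace = ∑ i, ((p i : ℝ) : ℂ) * (a i + b i) := by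
    rw [hρ, Finset.sum_mul, Matrix.trace_sum]
    refine Finset.sum_congr rfl fun i _ => ?_
    rw [smul_mul_assoc, Matrix.trace_smul, trace_proj_mul, hdX i, smul_eq_mul]
  have hT2 : (ρAB * X ^ 2).trace = ∑ i, ((p i : ℝ) : ℂ) * (a2 i + 2 * (a i * b i) + b2 i) := by
    rw [hρ, Finset.sum_mul, Matrix.trace_sum]
    refine Finset.sum_congr rfl fun i _ => ?_
    rw [smul_mul_assoc, Matrix.trace_smul, trace_proj_mul, hdX2 i, smul_eq_mul]
  -- reality of expectations
  have hrealA : ∀ i, (starRingEnd ℂ) (a i) = a i := fun i => herm_dot_real A hA (ψA i)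
  have hrealB : ∀ i, (starRingEnd ℂ) (b i) = b i := fun i => herm_dot_real B hB (ψB i)
  set x : Fin m → ℝ := fun i => (a i + b i).re with hx
  have hre : ∀ i, a i + b i = ((x i : ℝ) : ℂ) := by
    intro i
    have : (starRingEnd ℂ) (a i + b i) = a i + b i := by
      rw [map_add, hrealA i, hrealB i]
    exact (Complex.conj_eq_iff_re.mp this).symm
  -- the real Cauchy–Schwarz step
  have hreal : 0 ≤ (∑ i, p i * x i ^ 2) - (∑ i, p i * x i) ^ 2 := by
    have hcs := Finset.sum_mul_sq_le_sq_mul_sq Finset.univ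
      (fun i => Real.sqrt (p i)) (fun i => Real.sqrt (p i) * x i)
    have h1 : ∀ i, Real.sqrt (p i) * (Real.sqrt (p i) * x i) = p i * x i := by
      intro i; rw [← mul_assoc, Real.mul_self_sqrt (hp i)]
    have h2 : ∀ i, Real.sqrt (p i) ^ 2 = p i := fun i => Real.sq_sqrt (hp i)
    have h3 : ∀ i, (Real.sqrt (p i) * x i) ^ 2 = p i * x i ^ 2 := by
      intro i; rw [mul_pow, h2 i]
    simp only [h1, h2, h3, hps, one_mul] at hcs
    linarith
  -- put everything together
  rw [varM, hT1, hT2]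
  rw [← sub_nonneg]
  have key : (∑ i, ((p i : ℝ) : ℂ) * (a2 i + 2 * (a i * b i) + b2 i)) -
      (∑ i, ((p i : ℝ) : ℂ) * (a i + b i)) ^ 2 -
      (∑ i, ((p i : ℝ) : ℂ) * (varVec (ψA i) A + varVec (ψB i) B)) =
      (((∑ i, p i * x i ^ 2) - (∑ i, p i * x i) ^ 2 : ℝ) : ℂ) := by
    have hv : ∀ i, varVec (ψA i) A + varVec (ψB i) B =
        a2 i + 2 * (a i * b i) + b2 i - ((x i : ℝ) : ℂ) ^ 2 := by
      intro i
      simp only [varVec, ha, hb, ha2, hb2]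
      rw [← hre i]
      ring
    simp only [hv, hre, mul_sub, Finset.sum_sub_distrib]
    push_cast
    ring
  rw [key]
  rw [Complex.zero_le_real]
  exact hreal
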